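/- arXiv:1910.03265 — 3 statements merged into one kernel-verified Lean document; each statement's English description precedes it below -/
import Mathlib

section
/- Let Ω be a nonempty finite type, M : Ω → PMF Ω a Markov kernel with stationary distribution π (π.bind M = π), f : Ω → S a function to a finite type S, and C : Ω × Ω → PMF (Ω × Ω) a Markovian coupling of M with itself with t-fold iterate K^t. Suppose p ∈ [0,1] and t is a positive integer such that for all initial states x₀, y₀, the probability under K^t (x₀,y₀) of the event {(a,b) : f a = f b} is at least p. Then for every initial state x₀, the total variation distance between the pushforward under f of the t-step distribution M^t started from x₀ and the pushforward of π under f is at most 1 − p. -/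
open scoped Classical

/-- The `t`-step distribution of the Markov chain with kernel `M` started at `x`. -/
noncomputable def stepsPMF {Ω : Type*} (M : Ω → PMF Ω) : ℕ → Ω → PMF Ω
  | 0, x => PMF.pure x
  | (t + 1), x => (M x).bind (stepsPMF M t)

/-- Total variation distance between two probability distributions on a finite type. -/
noncomputable def tvDist {Ω : Type*} [Fintype Ω] (μ ν : PMF Ω) : ℝ :=
  (1 / 2) * ∑ a, |(μ a).toReal - (ν a).toReal|

/-- The probability of the event `E` under the distribution `μ`. -/
noncomputable def probEvent {α : Type*} [Fintype α] (μ : PMF α) (E : α → Prop) : ℝ :=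
  ∑ a, if E a then (μ a).toReal else 0

section Aux

variable {α β : Type*}

lemma pmf_sum_toReal_eq_one [Fintype α] (μ : PMF α) : ∑ a, (μ a).toReal = 1 := by
  rw [← ENNReal.toReal_sum (fun a _ => μ.apply_ne_top a)]
  rw [← tsum_fintype (L := SummationFilter.unconditional _)]
  rw [μ.tsum_coe]; simp

lemma pmf_map_toReal [Fintype α] (μ : PMF α) (f : α → β) (s : β) :
    ((μ.map f) s).toReal = ∑ a, if s = f a then (μ a).toReal else 0 := by
  rw [PMF.map_apply, tsum_fintype, ENNReal.toReal_sum]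
  · congr 1; ext a; split <;> simp
  · intro a _; split
    · exact μ.apply_ne_top a
    · simp

lemma pmf_bind_toReal [Fintype α] (μ : PMF α) (g : α → PMF β) (b : β) :
    ((μ.bind g) b).toReal = ∑ a, (μ a).toReal * ((g a) b).toReal := by
  rw [PMF.bind_apply, tsum_fintype, ENNReal.toReal_sum]
  · congr 1; ext a; rw [ENNReal.toReal_mul]
  · intro a _
    exact ENNReal.mul_ne_top (μ.apply_ne_top a) ((g a).apply_ne_top b)

end Aux

lemma stepsPMF_stationary {Ω : Type*} (M : Ω → PMF Ω) (π : PMF Ω) (hπ : π.bind M = π) :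
    ∀ t : ℕ, π.bind (stepsPMF M t) = π := by
  intro t
  induction t with
  | zero => simp [stepsPMF]
  | succ t ih =>
    show π.bind (fun x => (M x).bind (stepsPMF M t)) = π
    rw [← PMF.bind_bind, hπ, ih]

lemma stepsPMF_fst {Ω : Type*} (M : Ω → PMF Ω) (C : Ω × Ω → PMF (Ω × Ω))
    (hC₁ : ∀ x y : Ω, (C (x, y)).map Prod.fst = M x) :
    ∀ (t : ℕ) (x y : Ω), (stepsPMF C t (x, y)).map Prod.fst = stepsPMF M t x := by
  intro t
  induction t with
  | zero => intro x y; simp [stepsPMF, PMF.pure_map]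
  | succ t ih =>
    intro x y
    show ((C (x, y)).bind (stepsPMF C t)).map Prod.fst = (M x).bind (stepsPMF M t)
    rw [PMF.map_bind]
    have : (fun z : Ω × Ω => (stepsPMF C t z).map Prod.fst)
        = fun z : Ω × Ω => stepsPMF M t z.1 := by
      ext z : 1
      obtain ⟨a, b⟩ := z
      exact ih a b
    rw [this, ← hC₁ x y, PMF.bind_map]
    rfl

lemma stepsPMF_snd {Ω : Type*} (M : Ω → PMF Ω) (C : Ω × Ω → PMF (Ω × Ω))
    (hC₂ : ∀ x y : Ω, (C (x, y)).map Prod.snd = M y) :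
    ∀ (t : ℕ) (x y : Ω), (stepsPMF C t (x, y)).map Prod.snd = stepsPMF M t y := by
  intro t
  induction t with
  | zero => intro x y; simp [stepsPMF, PMF.pure_map]
  | succ t ih =>
    intro x y
    show ((C (x, y)).bind (stepsPMF C t)).map Prod.snd = (M y).bind (stepsPMF M t)
    rw [PMF.map_bind]
    have : (fun z : Ω × Ω => (stepsPMF C t z).map Prod.snd)
        = fun z : Ω × Ω => stepsPMF M t z.2 := by
      ext z : 1
      obtain ⟨a, b⟩ := z
      exact ih a b
    rw [this, ← hC₂ x y, PMF.bind_map]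
    rfl

lemma tv_le_uncoupled {Ω S : Type*} [Fintype Ω] [Fintype S] (K : PMF (Ω × Ω)) (f : Ω → S) :
    tvDist ((K.map Prod.fst).map f) ((K.map Prod.snd).map f)
      ≤ 1 - probEvent K (fun z => f z.1 = f z.2) := by
  rw [PMF.map_comp, PMF.map_comp]
  have h : ∀ s : S, |(((K.map (f ∘ Prod.fst)) s).toReal) - (((K.map (f ∘ Prod.snd)) s).toReal)|
      ≤ ∑ z : Ω × Ω, |(if s = f z.1 then (1:ℝ) else 0) - (if s = f z.2 then 1 else 0)|
          * (K z).toReal := by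
    intro s
    rw [pmf_map_toReal, pmf_map_toReal, ← Finset.sum_sub_distrib]
    refine (Finset.abs_sum_le_sum_abs _ _).trans (le_of_eq ?_)
    refine Finset.sum_congr rfl fun z _ => ?_
    by_cases h1 : s = f z.1 <;> by_cases h2 : s = f z.2
    · have h12 : f z.1 = f z.2 := h1.symm.trans h2
      simp [h1, h2, h12, Function.comp]
    · have h12 : f z.1 ≠ f z.2 := fun hf => h2 (h1.trans hf)
      simp [h1, h2, h12, Function.comp,
        abs_of_nonneg (ENNReal.toReal_nonneg : (0:ℝ) ≤ (K z).toReal)]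
    · have h12 : f z.1 ≠ f z.2 := fun hf => h1 (h2.trans hf.symm)
      simp [h1, h2, h12, Ne.symm h12, Function.comp,
        abs_of_nonneg (ENNReal.toReal_nonneg : (0:ℝ) ≤ (K z).toReal)]
    · simp [h1, h2, Function.comp]
  have key : tvDist ((K.map (f ∘ Prod.fst))) ((K.map (f ∘ Prod.snd)))
      ≤ (1/2) * ∑ s : S, ∑ z : Ω × Ω,
        |(if s = f z.1 then (1:ℝ) else 0) - (if s = f z.2 then 1 else 0)| * (K z).toReal := by
    unfold tvDist
    gcongr with s _
    exact h s
  refine key.trans (le_of_eq ?_)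
  rw [Finset.sum_comm]
  have h2 : ∀ z : Ω × Ω, ∑ s : S,
      |(if s = f z.1 then (1:ℝ) else 0) - (if s = f z.2 then 1 else 0)| * (K z).toReal
      = (if f z.1 = f z.2 then 0 else 2) * (K z).toReal := by
    intro z
    rw [← Finset.sum_mul]
    congr 1
    by_cases hz : f z.1 = f z.2
    · simp [hz]
    · rw [Finset.sum_eq_add_of_mem (f z.1) (f z.2) (Finset.mem_univ _) (Finset.mem_univ _) hz]
      · simp [hz, Ne.symm hz]
        norm_num
      · intro s _ hs
        simp [hs.1, hs.2]
  have h3 : ∑ z : Ω × Ω, (if f z.1 = f z.2 then (0:ℝ) else 2) * (K z).toReal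
      = 2 * (1 - probEvent K (fun z => f z.1 = f z.2)) := by
    unfold probEvent
    rw [← pmf_sum_toReal_eq_one K, mul_sub, Finset.mul_sum, Finset.mul_sum,
      ← Finset.sum_sub_distrib]
    refine Finset.sum_congr rfl fun z _ => ?_
    by_cases hz : f z.1 = f z.2 <;> simp [hz] <;> ring
  have h4 : ∑ z : Ω × Ω, ∑ s : S,
      |(if s = f z.1 then (1:ℝ) else 0) - (if s = f z.2 then 1 else 0)| * (K z).toReal
      = ∑ z : Ω × Ω, (if f z.1 = f z.2 then (0:ℝ) else 2) * (K z).toReal :=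
    Finset.sum_congr rfl fun z _ => h2 z
  rw [h4, h3]; ring

lemma tv_bind_le {Ω S : Type*} [Fintype Ω] [Fintype S] (μ : PMF S) (π : PMF Ω)
    (g : Ω → PMF S) (c : ℝ) (hc : ∀ y, tvDist μ (g y) ≤ c) :
    tvDist μ (π.bind g) ≤ c := by
  have h : tvDist μ (π.bind g) ≤ ∑ y : Ω, (π y).toReal * tvDist μ (g y) := by
    unfold tvDist
    rw [Finset.mul_sum]
    have hs : ∀ s : S, (1/2) * |(μ s).toReal - ((π.bind g) s).toReal|
        ≤ ∑ y : Ω, (π y).toReal * ((1/2) * |(μ s).toReal - ((g y) s).toReal|) := by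
      intro s
      have h1 : (μ s).toReal - ((π.bind g) s).toReal
          = ∑ y : Ω, (π y).toReal * ((μ s).toReal - ((g y) s).toReal) := by
        rw [pmf_bind_toReal]
        have : ∑ y : Ω, (π y).toReal * ((μ s).toReal - ((g y) s).toReal)
            = (∑ y : Ω, (π y).toReal) * (μ s).toReal
              - ∑ y : Ω, (π y).toReal * ((g y) s).toReal := by
          rw [Finset.sum_mul, ← Finset.sum_sub_distrib]
          congr 1; ext y; ring
        rw [this, pmf_sum_toReal_eq_one, one_mul]
      rw [h1]
      calc (1/2) * |∑ y : Ω, (π y).toReal * ((μ s).toReal - ((g y) s).toReal)|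
          ≤ (1/2) * ∑ y : Ω, |(π y).toReal * ((μ s).toReal - ((g y) s).toReal)| := by
            gcongr
            exact Finset.abs_sum_le_sum_abs _ _
        _ = ∑ y : Ω, (π y).toReal * ((1/2) * |(μ s).toReal - ((g y) s).toReal|) := by
            rw [Finset.mul_sum]
            congr 1; ext y
            rw [abs_mul, abs_of_nonneg (ENNReal.toReal_nonneg : (0:ℝ) ≤ (π y).toReal)]
            ring
    calc ∑ s : S, (1/2) * |(μ s).toReal - ((π.bind g) s).toReal|
        ≤ ∑ s : S, ∑ y : Ω, (π y).toReal * ((1/2) * |(μ s).toReal - ((g y) s).toReal|) :=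
          Finset.sum_le_sum fun s _ => hs s
      _ = ∑ y : Ω, (π y).toReal * tvDist μ (g y) := by
          rw [Finset.sum_comm]
          congr 1; ext y
          unfold tvDist
          rw [Finset.mul_sum, Finset.mul_sum]
  refine h.trans ?_
  calc ∑ y : Ω, (π y).toReal * tvDist μ (g y) ≤ ∑ y : Ω, (π y).toReal * c := by
        gcongr with y
        exact hc y
    _ = c := by rw [← Finset.sum_mul, pmf_sum_toReal_eq_one, one_mul]

/-- If a Markovian coupling makes the values of the statistic `f` agree after `t` steps with
probability at least `p` from every pair of initial states, then the distribution of `f` after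
`t` steps from any initial state is within `1 - p` of its stationary distribution in total
variation. -/
theorem coupling_gives_statistic_mixing_bound {Ω S : Type*} [Fintype Ω] [Nonempty Ω] [Fintype S]
    (M : Ω → PMF Ω) (π : PMF Ω) (hπ : π.bind M = π) (f : Ω → S)
    (C : Ω × Ω → PMF (Ω × Ω))
    (hC₁ : ∀ x y : Ω, (C (x, y)).map Prod.fst = M x)
    (hC₂ : ∀ x y : Ω, (C (x, y)).map Prod.snd = M y)
    (p : ℝ) (hp₀ : 0 ≤ p) (hp₁ : p ≤ 1) (t : ℕ) (ht : 0 < t)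
    (hcouple : ∀ x₀ y₀ : Ω,
      p ≤ probEvent (stepsPMF C t (x₀, y₀)) (fun z => f z.1 = f z.2)) :
    ∀ x₀ : Ω, tvDist ((stepsPMF M t x₀).map f) (π.map f) ≤ 1 - p := by
  intro x₀
  have hmap : π.map f = π.bind (fun y => (stepsPMF M t y).map f) := by
    conv_lhs => rw [← stepsPMF_stationary M π hπ t]
    exact PMF.map_bind _ _ _
  rw [hmap]
  refine tv_bind_le _ _ _ _ ?_
  intro y₀
  have h1 := tv_le_uncoupled (stepsPMF C t (x₀, y₀)) f
  rw [stepsPMF_fst M C hC₁ t x₀ y₀, stepsPMF_snd M C hC₂ t x₀ y₀] at h1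
  refine h1.trans ?_
  linarith [hcouple x₀ y₀]
end

section
/- Let n ≥ 2 and fix a card label c. For a deck of n cards after t inverse riffle shuffles, starting from any fixed order, the total variation distance between the distribution of the position of the card labelled c and the uniform distribution on the n positions is at most (n − 1)/2^t. -/
open scoped Classical

/-- The value of a bit string, reading the first coordinate as most significant (so comparison of
values is lexicographic comparison of strings). -/
def strVal (t : ℕ) (s : Fin t → Bool) : ℕ :=
  ∑ i : Fin t, if s i then 2 ^ (t - 1 - (i : ℕ)) else 0

/-- The deck obtained from the deck order `σ₀` (where `σ₀ p` is the label of the card in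
position `p`, position `0` being the top) after `t` inverse riffle shuffles realised by the bit
strings `s`: the card with label `c` is assigned the string `s c` and the deck is sorted stably
by these strings (cards with lexicographically smaller strings nearer the top, cards with equal
strings keeping their original relative order). -/
noncomputable def riffleResult {n : ℕ} (t : ℕ) (σ₀ : Equiv.Perm (Fin n))
    (s : Fin n → Fin t → Bool) : Equiv.Perm (Fin n) :=
  (Tuple.sort (fun p => strVal t (s (σ₀ p)))).trans σ₀

open Finset

/-! ### Auxiliary lemmas -/

section StrValLemmas

lemma strVal_succ (t : ℕ) (s : Fin (t+1) → Bool) :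
    strVal (t+1) s = (if s 0 then 2^t else 0) + strVal t (fun i => s i.succ) := by
  rw [strVal, Fin.sum_univ_succ]
  simp only [strVal, Fin.val_zero, Nat.sub_zero, Fin.val_succ]
  congr 1
  apply Finset.sum_congr rfl
  intro x _
  rw [show t + 1 - 1 - (↑x + 1) = t - 1 - ↑x by omega]

lemma strVal_lt (t : ℕ) (s : Fin t → Bool) : strVal t s < 2 ^ t := by
  induction t with
  | zero => simp [strVal]
  | succ t ih =>
      rw [strVal_succ]
      have := ih (fun i => s i.succ)
      rcases Bool.eq_false_or_eq_true (s 0) with h | h <;> simp [h, pow_succ] <;> omega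

lemma strVal_injective (t : ℕ) : Function.Injective (strVal t) := by
  induction t with
  | zero => intro s s' _; funext i; exact absurd i.2 (by omega)
  | succ t ih =>
      intro s s' h
      rw [strVal_succ, strVal_succ] at h
      have h1 := strVal_lt t (fun i => s i.succ)
      have h2 := strVal_lt t (fun i => s' i.succ)
      have hb : s 0 = s' 0 := by
        rcases Bool.eq_false_or_eq_true (s 0) with hh | hh <;>
          rcases Bool.eq_false_or_eq_true (s' 0) with hh' | hh' <;>
          simp [hh, hh'] at h ⊢ <;> omega
      have htail : (fun i : Fin t => s i.succ) = (fun i => s' i.succ) := by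
        apply ih; rw [hb] at h; omega
      funext i
      refine Fin.cases ?_ ?_ i
      · exact hb
      · intro j; exact congrFun htail j

end StrValLemmas

section RankLemmas

/-- The key of card `j` : its bit-string value together with a tie-breaking index. -/
noncomputable def keyF (t : ℕ) {n : ℕ} (s : Fin n → Fin t → Bool) (ρ : Fin n → Fin n)
    (j : Fin n) : ℕ ×ₗ Fin n := toLex (strVal t (s j), ρ j)

/-- The rank of card `j` among all cards, by key. -/
noncomputable def rnk (t : ℕ) {n : ℕ} (s : Fin n → Fin t → Bool) (ρ : Fin n → Fin n)
    (j : Fin n) : ℕ := (univ.filter (fun i => keyF t s ρ i < keyF t s ρ j)).card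

lemma rank_formula {n : ℕ} {L : Type*} [LinearOrder L] (σ : Equiv.Perm (Fin n))
    (h : Fin n → L) (hs : StrictMono (fun i => h (σ i))) (q : Fin n) :
    ((σ.symm q : Fin n) : ℕ) = (Finset.univ.filter (fun p => h p < h q)).card := by
  have key : ∀ i : Fin n, h (σ i) < h q ↔ i < σ.symm q := by
    intro i
    rw [← hs.lt_iff_lt (b := σ.symm q)]
    simp
  calc ((σ.symm q : Fin n) : ℕ)
      = (Finset.univ.filter (fun i => i < σ.symm q)).card := by
        rw [show Finset.univ.filter (fun i => i < σ.symm q) = Finset.Iio (σ.symm q) by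
          ext i; simp, Fin.card_Iio]
    _ = (Finset.univ.filter (fun p => h p < h q)).card := by
        apply Finset.card_bij (fun i _ => σ i)
        · intro i hi
          simp only [Finset.mem_filter, Finset.mem_univ, true_and] at hi ⊢
          exact (key i).2 hi
        · intro i _ j _ hij; exact σ.injective hij
        · intro p hp
          simp only [Finset.mem_filter, Finset.mem_univ, true_and] at hp
          refine ⟨σ.symm p, ?_, by simp⟩
          simp only [Finset.mem_filter, Finset.mem_univ, true_and]
          rw [← key]; simpa using hp

/-- The position of the card labelled `c` after the shuffle is its rank, with ties broken
by original position. -/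
lemma posF_eq {n : ℕ} (t : ℕ) (σ₀ : Equiv.Perm (Fin n)) (s : Fin n → Fin t → Bool) (c : Fin n) :
    (((riffleResult t σ₀ s)⁻¹ c : Fin n) : ℕ) = rnk t s (fun j => σ₀.symm j) c := by
  set f : Fin n → ℕ := fun p => strVal t (s (σ₀ p)) with hf
  have h1 : (riffleResult t σ₀ s)⁻¹ c = (Tuple.sort f).symm (σ₀.symm c) := rfl
  have hs : StrictMono (fun i => Tuple.graphEquiv₁ f ((Tuple.sort f) i)) :=
    Tuple.eq_sort_iff'.mp rfl
  rw [h1, rank_formula (Tuple.sort f) (fun p => Tuple.graphEquiv₁ f p) hs (σ₀.symm c)]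
  apply Finset.card_bij (fun p _ => σ₀ p)
  · intro p hp
    simp only [Finset.mem_filter, Finset.mem_univ, true_and] at hp ⊢
    have : keyF t s (fun j => σ₀.symm j) (σ₀ p) < keyF t s (fun j => σ₀.symm j) c := by
      have hlt : (toLex (f p, p) : ℕ ×ₗ Fin n) < toLex (f (σ₀.symm c), σ₀.symm c) := hp
      simpa [keyF, hf] using hlt
    exact this
  · intro i _ j _ hij; exact σ₀.injective hij
  · intro j hj
    simp only [Finset.mem_filter, Finset.mem_univ, true_and] at hj
    refine ⟨σ₀.symm j, ?_, by simp⟩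
    simp only [Finset.mem_filter, Finset.mem_univ, true_and]
    show (toLex (f (σ₀.symm j), σ₀.symm j) : ℕ ×ₗ Fin n) < toLex (f (σ₀.symm c), σ₀.symm c)
    simpa [keyF, hf] using hj

lemma rnk_lt {n t : ℕ} [NeZero n] (s : Fin n → Fin t → Bool) (ρ : Fin n → Fin n) (j : Fin n) :
    rnk t s ρ j < n := by
  have hsub : univ.filter (fun i => keyF t s ρ i < keyF t s ρ j) ⊆ univ.erase j := by
    intro i hi
    simp only [Finset.mem_filter, Finset.mem_univ, true_and] at hi
    refine Finset.mem_erase.2 ⟨fun he => ?_, Finset.mem_univ _⟩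
    subst he; exact lt_irrefl _ hi
  calc rnk t s ρ j ≤ (univ.erase j).card := Finset.card_le_card hsub
    _ = n - 1 := by rw [Finset.card_erase_of_mem (Finset.mem_univ _)]; simp
    _ < n := Nat.sub_lt (Nat.pos_of_ne_zero (NeZero.ne n)) one_pos

lemma rnk_lt_rnk {n t : ℕ} (s : Fin n → Fin t → Bool) (π : Equiv.Perm (Fin n)) {i j : Fin n}
    (h : keyF t s π i < keyF t s π j) : rnk t s π i < rnk t s π j := by
  apply Finset.card_lt_card
  rw [Finset.ssubset_iff_of_subset]
  · exact ⟨i, by simp [h], by simp⟩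
  · intro x hx
    simp only [Finset.mem_filter, Finset.mem_univ, true_and] at hx ⊢
    exact hx.trans h

lemma keyF_ne {n t : ℕ} (s : Fin n → Fin t → Bool) (π : Equiv.Perm (Fin n)) {i j : Fin n}
    (h : i ≠ j) : keyF t s π i ≠ keyF t s π j := by
  intro he
  apply h
  have : ((ofLex (keyF t s π i)).2 : Fin n) = (ofLex (keyF t s π j)).2 := by rw [he]
  exact π.injective this

lemma rnk_bijective {n t : ℕ} [NeZero n] (s : Fin n → Fin t → Bool) (π : Equiv.Perm (Fin n)) :
    Function.Bijective (fun j => (⟨rnk t s π j, rnk_lt s π j⟩ : Fin n)) := by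
  rw [Fintype.bijective_iff_injective_and_card]
  refine ⟨fun i j hij => ?_, rfl⟩
  by_contra hne
  have hval : rnk t s π i = rnk t s π j := by simpa [Fin.ext_iff] using hij
  rcases lt_or_gt_of_ne (keyF_ne s π hne) with h | h
  · exact absurd hval (Nat.ne_of_lt (rnk_lt_rnk s π h))
  · exact absurd hval.symm (Nat.ne_of_lt (rnk_lt_rnk s π h))

/-- Relabelling by a permutation τ shifts ranks. -/
lemma rnk_comp {n t : ℕ} (s : Fin n → Fin t → Bool) (π : Fin n → Fin n)
    (τ : Equiv.Perm (Fin n)) (i : Fin n) :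
    rnk t (fun x => s (τ x)) (fun x => π (τ x)) i = rnk t s π (τ i) := by
  apply Finset.card_bij (fun x _ => τ x)
  · intro x hx
    simp only [Finset.mem_filter, Finset.mem_univ, true_and] at hx ⊢
    exact hx
  · intro a _ b _ hab; exact τ.injective hab
  · intro b hb
    simp only [Finset.mem_filter, Finset.mem_univ, true_and] at hb
    refine ⟨τ.symm b, ?_, by simp⟩
    simp only [Finset.mem_filter, Finset.mem_univ, true_and]
    show keyF t (fun x => s (τ x)) (fun x => π (τ x)) (τ.symm b) < _
    simpa [keyF] using hb

/-- If no other card's string value ties with card `c`, then the rank of `c` does not depend on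
the tie-breaking order. -/
lemma rnk_tie_free {n t : ℕ} {s : Fin n → Fin t → Bool} {c : Fin n}
    (h : ∀ j, j ≠ c → strVal t (s j) ≠ strVal t (s c)) (ρ : Fin n → Fin n) :
    rnk t s ρ c = (univ.filter (fun j => strVal t (s j) < strVal t (s c))).card := by
  unfold rnk
  congr 1
  ext j
  simp only [Finset.mem_filter, Finset.mem_univ, true_and, keyF, Prod.Lex.lt_iff]
  by_cases hj : j = c
  · subst hj; simp
  · constructor
    · rintro (h1 | ⟨h1, _⟩)
      · exact h1
      · exact absurd h1 (h j hj)
    · intro h1; exact Or.inl h1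

end RankLemmas

section CountingLemmas

/-- The tie-broken rank of a fixed card is exactly uniform over the enlarged sample space. -/
lemma count_uniform {n t : ℕ} [NeZero n] (c : Fin n) (k : Fin n) :
    n * (univ.filter (fun ω : (Fin n → Fin t → Bool) × Equiv.Perm (Fin n) =>
        rnk t ω.1 ω.2 c = (k : ℕ))).card
      = Fintype.card ((Fin n → Fin t → Bool) × Equiv.Perm (Fin n)) := by
  have hswap : ∀ j : Fin n,
      (univ.filter (fun ω : (Fin n → Fin t → Bool) × Equiv.Perm (Fin n) =>
        rnk t ω.1 ω.2 j = (k : ℕ))).card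
      = (univ.filter (fun ω : (Fin n → Fin t → Bool) × Equiv.Perm (Fin n) =>
        rnk t ω.1 ω.2 c = (k : ℕ))).card := by
    intro j
    set τ := Equiv.swap c j with hτ
    have hτc : τ c = j := Equiv.swap_apply_left c j
    apply Finset.card_bij (fun ω _ => ((fun x => ω.1 (τ x), ω.2 * τ) :
      (Fin n → Fin t → Bool) × Equiv.Perm (Fin n)))
    · intro ω hω
      simp only [Finset.mem_filter, Finset.mem_univ, true_and] at hω ⊢
      have : rnk t (fun x => ω.1 (τ x)) (⇑(ω.2 * τ)) c
          = rnk t ω.1 (⇑ω.2) (τ c) := rnk_comp ω.1 (⇑ω.2) τ c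
      rw [this, hτc]; exact hω
    · intro a _ b _ hab
      have h1 : (fun x => a.1 (τ x)) = (fun x => b.1 (τ x)) := congrArg Prod.fst hab
      have h2 : a.2 * τ = b.2 * τ := congrArg Prod.snd hab
      have ha1 : a.1 = b.1 := by
        funext x
        have := congrFun h1 (τ.symm x)
        simpa using this
      have ha2 : a.2 = b.2 := mul_right_cancel h2
      exact Prod.ext ha1 ha2
    · intro ω hω
      simp only [Finset.mem_filter, Finset.mem_univ, true_and] at hω
      refine ⟨(fun x => ω.1 (τ x), ω.2 * τ), ?_, ?_⟩
      · simp only [Finset.mem_filter, Finset.mem_univ, true_and]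
        have : rnk t (fun x => ω.1 (τ x)) (⇑(ω.2 * τ)) j
            = rnk t ω.1 (⇑ω.2) (τ j) := rnk_comp ω.1 (⇑ω.2) τ j
        rw [this, hτ, Equiv.swap_apply_right]
        exact hω
      · refine Prod.ext ?_ ?_
        · funext x
          simp [hτ, Equiv.swap_apply_self]
        · show (ω.2 * τ) * τ = ω.2
          rw [hτ, mul_assoc, Equiv.swap_mul_self, mul_one]
  have hone : ∀ ω : (Fin n → Fin t → Bool) × Equiv.Perm (Fin n),
      (univ.filter (fun j => rnk t ω.1 ω.2 j = (k : ℕ))).card = 1 := by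
    intro ω
    obtain ⟨j₀, hj₀⟩ := (rnk_bijective ω.1 ω.2).2 k
    rw [Finset.card_eq_one]
    refine ⟨j₀, ?_⟩
    ext j
    simp only [Finset.mem_filter, Finset.mem_univ, true_and, Finset.mem_singleton]
    constructor
    · intro hj
      apply (rnk_bijective ω.1 ω.2).1
      rw [hj₀]
      exact Fin.ext (by simpa using hj)
    · rintro rfl
      simpa [Fin.ext_iff] using congrArg Fin.val hj₀
  calc n * (univ.filter (fun ω : (Fin n → Fin t → Bool) × Equiv.Perm (Fin n) =>
        rnk t ω.1 ω.2 c = (k : ℕ))).card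
      = ∑ j : Fin n, (univ.filter (fun ω : (Fin n → Fin t → Bool) × Equiv.Perm (Fin n) =>
        rnk t ω.1 ω.2 j = (k : ℕ))).card := by
        rw [Finset.sum_congr rfl (fun j _ => hswap j)]
        simp [mul_comm]
    _ = ∑ j : Fin n, ∑ ω : (Fin n → Fin t → Bool) × Equiv.Perm (Fin n),
          if rnk t ω.1 ω.2 j = (k : ℕ) then 1 else 0 := by
        refine Finset.sum_congr rfl fun j _ => ?_
        rw [Finset.card_filter]
    _ = ∑ ω : (Fin n → Fin t → Bool) × Equiv.Perm (Fin n), ∑ j : Fin n,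
          if rnk t ω.1 ω.2 j = (k : ℕ) then 1 else 0 := Finset.sum_comm
    _ = ∑ ω : (Fin n → Fin t → Bool) × Equiv.Perm (Fin n), 1 := by
        refine Finset.sum_congr rfl fun ω _ => ?_
        rw [← Finset.card_filter, hone ω]
    _ = Fintype.card ((Fin n → Fin t → Bool) × Equiv.Perm (Fin n)) := by simp

lemma card_eq_coord {n : ℕ} {X : Type*} [Fintype X] [DecidableEq X] {j c : Fin n} (hjc : j ≠ c) :
    (univ.filter (fun s : Fin n → X => s j = s c)).card = Fintype.card X ^ (n - 1) := by
  classical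
  rw [← Fintype.card_subtype]
  have e : {s : Fin n → X // s j = s c} ≃ ({i : Fin n // i ≠ j} → X) :=
    { toFun := fun s i => s.1 i.1
      invFun := fun g => ⟨fun i => if h : i = j then g ⟨c, Ne.symm hjc⟩ else g ⟨i, h⟩, by
        simp [hjc.symm]⟩
      left_inv := fun s => by
        apply Subtype.ext
        funext i
        by_cases h : i = j
        · subst h; simp [s.2.symm]
        · simp [h]
      right_inv := fun g => by
        funext i
        simp [i.2] }
  rw [Fintype.card_congr e, Fintype.card_fun]
  congr 1
  have : Fintype.card {i : Fin n // i ≠ j} = Fintype.card {i : Fin n // ¬ (i = j)} := rfl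
  rw [this, Fintype.card_subtype_compl, Fintype.card_subtype_eq, Fintype.card_fin]

lemma tie_count {n : ℕ} (t : ℕ) (c : Fin n) :
    (univ.filter (fun s : Fin n → Fin t → Bool =>
      ∃ j, ¬ j = c ∧ strVal t (s j) = strVal t (s c))).card
      ≤ (n - 1) * (2 ^ t) ^ (n - 1) := by
  classical
  have hsub : (univ.filter (fun s : Fin n → Fin t → Bool =>
      ∃ j, ¬ j = c ∧ strVal t (s j) = strVal t (s c)))
      ⊆ (univ.erase c).biUnion
        (fun j => univ.filter (fun s : Fin n → Fin t → Bool => s j = s c)) := by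
    intro s hs
    simp only [Finset.mem_filter, Finset.mem_univ, true_and] at hs
    obtain ⟨j, hj, heq⟩ := hs
    refine Finset.mem_biUnion.2 ⟨j, Finset.mem_erase.2 ⟨hj, Finset.mem_univ _⟩, ?_⟩
    simp only [Finset.mem_filter, Finset.mem_univ, true_and]
    exact strVal_injective t heq
  calc (univ.filter (fun s : Fin n → Fin t → Bool =>
      ∃ j, ¬ j = c ∧ strVal t (s j) = strVal t (s c))).card
      ≤ ((univ.erase c).biUnion
        (fun j => univ.filter (fun s : Fin n → Fin t → Bool => s j = s c))).card :=
        Finset.card_le_card hsub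
    _ ≤ ∑ j ∈ univ.erase c,
        (univ.filter (fun s : Fin n → Fin t → Bool => s j = s c)).card :=
        Finset.card_biUnion_le
    _ = ∑ j ∈ univ.erase c, (2 ^ t) ^ (n - 1) := by
        refine Finset.sum_congr rfl fun j hj => ?_
        have hjc : j ≠ c := (Finset.mem_erase.1 hj).1
        rw [card_eq_coord hjc]
        congr 1
        simp [Fintype.card_fun]
    _ = (n - 1) * (2 ^ t) ^ (n - 1) := by
        rw [Finset.sum_const, Finset.card_erase_of_mem (Finset.mem_univ _)]
        simp [Finset.card_univ, mul_comm]

end CountingLemmas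

section PMFLemmas

lemma map_uniform_toReal {S : Type*} [Fintype S] [Nonempty S] {β : Type*} [Fintype β]
    [DecidableEq β] (f : S → β) (a : β) :
    (((PMF.uniformOfFintype S).map f) a).toReal
      = (univ.filter (fun b => f b = a)).card / Fintype.card S := by
  rw [PMF.map_apply, tsum_fintype]
  simp only [PMF.uniformOfFintype_apply]
  rw [← Finset.sum_filter, Finset.sum_const]
  have hfil : univ.filter (fun b => a = f b) = univ.filter (fun b => f b = a) := by
    ext b; simp [eq_comm]
  rw [hfil, nsmul_eq_mul, ENNReal.toReal_mul, ENNReal.toReal_inv]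
  simp [div_eq_mul_inv]

lemma filter_fst_card {S P : Type*} [Fintype S] [Fintype P] (p : S → Prop)
    [DecidablePred p] :
    (univ.filter (fun ω : S × P => p ω.1)).card
      = (univ.filter p).card * Fintype.card P := by
  classical
  have : (univ.filter (fun ω : S × P => p ω.1)) = (univ.filter p) ×ˢ univ := by
    ext ω; simp [Finset.mem_product]
  rw [this, Finset.card_product, Finset.card_univ]

lemma sum_abs_card_le {Ω β : Type*} [Fintype Ω] [Fintype β] [DecidableEq β] (F G : Ω → β) :
    ∑ a : β, |((univ.filter (fun ω : Ω => F ω = a)).card : ℝ)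
      - ((univ.filter (fun ω : Ω => G ω = a)).card : ℝ)|
    ≤ 2 * (univ.filter (fun ω : Ω => ¬ F ω = G ω)).card := by
  classical
  have key : ∀ a : β, |((univ.filter (fun ω : Ω => F ω = a)).card : ℝ)
      - ((univ.filter (fun ω : Ω => G ω = a)).card : ℝ)|
      ≤ ((univ.filter (fun ω : Ω => F ω = a ∧ ¬ F ω = G ω)).card : ℝ)
        + ((univ.filter (fun ω : Ω => G ω = a ∧ ¬ F ω = G ω)).card : ℝ) := by
    intro a
    have hA' := Finset.card_filter_add_card_filter_not
      (s := univ.filter (fun ω : Ω => F ω = a)) (p := fun ω => ¬ F ω = G ω)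
    have hB' := Finset.card_filter_add_card_filter_not
      (s := univ.filter (fun ω : Ω => G ω = a)) (p := fun ω => ¬ F ω = G ω)
    simp only [Finset.filter_filter, not_not] at hA' hB'
    have hC : (univ.filter (fun ω : Ω => F ω = a ∧ F ω = G ω)).card
        = (univ.filter (fun ω : Ω => G ω = a ∧ F ω = G ω)).card := by
      congr 1
      ext ω
      simp only [Finset.mem_filter, Finset.mem_univ, true_and]
      constructor
      · rintro ⟨h1, h2⟩; exact ⟨h2 ▸ h1, h2⟩
      · rintro ⟨h1, h2⟩; exact ⟨h2.symm ▸ h1, h2⟩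
    have hAB : (univ.filter (fun ω : Ω => F ω = a)).card
        + (univ.filter (fun ω : Ω => G ω = a ∧ ¬ F ω = G ω)).card
        = (univ.filter (fun ω : Ω => G ω = a)).card
        + (univ.filter (fun ω : Ω => F ω = a ∧ ¬ F ω = G ω)).card := by
      omega
    have hreal : ((univ.filter (fun ω : Ω => F ω = a)).card : ℝ)
        - ((univ.filter (fun ω : Ω => G ω = a)).card : ℝ)
        = ((univ.filter (fun ω : Ω => F ω = a ∧ ¬ F ω = G ω)).card : ℝ)
        - ((univ.filter (fun ω : Ω => G ω = a ∧ ¬ F ω = G ω)).card : ℝ) := by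
      have := congrArg (Nat.cast (R := ℝ)) hAB
      push_cast at this
      linarith
    rw [hreal]
    exact (abs_sub _ _).trans (by simp)
  calc ∑ a : β, |((univ.filter (fun ω : Ω => F ω = a)).card : ℝ)
      - ((univ.filter (fun ω : Ω => G ω = a)).card : ℝ)|
      ≤ ∑ a : β, (((univ.filter (fun ω : Ω => F ω = a ∧ ¬ F ω = G ω)).card : ℝ)
        + ((univ.filter (fun ω : Ω => G ω = a ∧ ¬ F ω = G ω)).card : ℝ)) :=
        Finset.sum_le_sum (fun a _ => key a)
    _ = 2 * (univ.filter (fun ω : Ω => ¬ F ω = G ω)).card := by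
        rw [Finset.sum_add_distrib]
        have h1 : ∑ a : β, ((univ.filter (fun ω : Ω => F ω = a ∧ ¬ F ω = G ω)).card : ℝ)
            = ((univ.filter (fun ω : Ω => ¬ F ω = G ω)).card : ℝ) := by
          rw [← Nat.cast_sum]
          congr 1
          rw [Finset.card_eq_sum_card_fiberwise (f := F)
            (s := univ.filter (fun ω : Ω => ¬ F ω = G ω))
            (t := univ) (fun x _ => Finset.mem_univ _)]
          refine (Finset.sum_congr rfl fun a _ => ?_).symm
          rw [Finset.filter_filter]
          congr 1
          ext ω
          simp only [Finset.mem_filter, Finset.mem_univ, true_and]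
          exact and_comm
        have h2 : ∑ a : β, ((univ.filter (fun ω : Ω => G ω = a ∧ ¬ F ω = G ω)).card : ℝ)
            = ((univ.filter (fun ω : Ω => ¬ F ω = G ω)).card : ℝ) := by
          rw [← Nat.cast_sum]
          congr 1
          rw [Finset.card_eq_sum_card_fiberwise (f := G)
            (s := univ.filter (fun ω : Ω => ¬ F ω = G ω))
            (t := univ) (fun x _ => Finset.mem_univ _)]
          refine (Finset.sum_congr rfl fun a _ => ?_).symm
          rw [Finset.filter_filter]
          congr 1
          ext ω
          simp only [Finset.mem_filter, Finset.mem_univ, true_and]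
          exact and_comm
        rw [h1, h2]; ring

end PMFLemmas

/-- After `t` inverse riffle shuffles from any fixed order, the position of the card with label
`c` is within `(n-1)/2^t` of uniform in total variation. -/
theorem riffle_position_of_card (n : ℕ) [NeZero n] (hn : 2 ≤ n) (c : Fin n)
    (σ₀ : Equiv.Perm (Fin n)) (t : ℕ) :
    tvDist ((PMF.uniformOfFintype (Fin n → Fin t → Bool)).map
        (fun s => (riffleResult t σ₀ s)⁻¹ c))
      (PMF.uniformOfFintype (Fin n)) ≤ ((n : ℝ) - 1) / 2 ^ t := by
  classical
  have hn1 : (1:ℕ) ≤ n := le_trans one_le_two hn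
  have hcS : (Fintype.card (Fin n → Fin t → Bool)) = (2 ^ t) ^ n := by
    simp [Fintype.card_fun]
  set cP := Fintype.card (Equiv.Perm (Fin n)) with hcP
  have hcPpos : 0 < cP := Fintype.card_pos
  have hcΩ' : Fintype.card ((Fin n → Fin t → Bool) × Equiv.Perm (Fin n))
      = (2 ^ t) ^ n * cP := by rw [Fintype.card_prod, hcS]
  have hcΩpos : 0 < Fintype.card ((Fin n → Fin t → Bool) × Equiv.Perm (Fin n)) :=
    Fintype.card_pos
  have h2t : (0:ℝ) < 2 ^ t := by positivity
  set F : ((Fin n → Fin t → Bool) × Equiv.Perm (Fin n)) → Fin n :=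
    fun ω => (riffleResult t σ₀ ω.1)⁻¹ c with hF
  set G : ((Fin n → Fin t → Bool) × Equiv.Perm (Fin n)) → Fin n :=
    fun ω => ⟨rnk t ω.1 ω.2 c, rnk_lt ω.1 ω.2 c⟩ with hG
  set cΩ := Fintype.card ((Fin n → Fin t → Bool) × Equiv.Perm (Fin n)) with hcΩ
  -- value of μ
  have hμ : ∀ a : Fin n,
      (((PMF.uniformOfFintype (Fin n → Fin t → Bool)).map
        (fun s => (riffleResult t σ₀ s)⁻¹ c)) a).toReal
      = ((univ.filter (fun ω : (Fin n → Fin t → Bool) × Equiv.Perm (Fin n) =>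
          F ω = a)).card : ℝ) / cΩ := by
    intro a
    rw [map_uniform_toReal]
    have hAΩ : (univ.filter (fun ω : (Fin n → Fin t → Bool) × Equiv.Perm (Fin n) =>
        F ω = a)).card
        = (univ.filter
            (fun s : Fin n → Fin t → Bool => (riffleResult t σ₀ s)⁻¹ c = a)).card * cP := by
      exact filter_fst_card (S := Fin n → Fin t → Bool) (P := Equiv.Perm (Fin n))
        (fun s => (riffleResult t σ₀ s)⁻¹ c = a)
    rw [hAΩ, hcΩ', hcS]
    have hPne : (cP : ℝ) ≠ 0 := by exact_mod_cast hcPpos.ne'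
    have h2tn : ((2:ℝ) ^ t) ^ n ≠ 0 := by positivity
    push_cast
    field_simp
  -- value of ν : the tie-broken rank is exactly uniform
  have hν : ∀ a : Fin n,
      ((PMF.uniformOfFintype (Fin n)) a).toReal
      = ((univ.filter (fun ω : (Fin n → Fin t → Bool) × Equiv.Perm (Fin n) =>
          G ω = a)).card : ℝ) / cΩ := by
    intro a
    have hBa : (univ.filter (fun ω : (Fin n → Fin t → Bool) × Equiv.Perm (Fin n) => G ω = a))
        = (univ.filter (fun ω : (Fin n → Fin t → Bool) × Equiv.Perm (Fin n) =>
            rnk t ω.1 ω.2 c = (a : ℕ))) := by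
      ext ω
      simp only [Finset.mem_filter, Finset.mem_univ, true_and, hG, Fin.ext_iff]
    have hnB : n * (univ.filter
        (fun ω : (Fin n → Fin t → Bool) × Equiv.Perm (Fin n) => G ω = a)).card = cΩ := by
      rw [hBa]
      exact count_uniform c a
    have hval : ((PMF.uniformOfFintype (Fin n)) a).toReal = 1 / (n : ℝ) := by
      simp [PMF.uniformOfFintype_apply, ENNReal.toReal_inv]
    rw [hval]
    have hncast : ((n : ℝ)) * ((univ.filter
        (fun ω : (Fin n → Fin t → Bool) × Equiv.Perm (Fin n) => G ω = a)).card : ℝ)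
        = (cΩ : ℝ) := by exact_mod_cast congrArg (Nat.cast (R := ℝ)) hnB
    have hnpos : (0:ℝ) < n := by exact_mod_cast Nat.pos_of_ne_zero (NeZero.ne n)
    have hcΩposR : (0:ℝ) < (cΩ : ℝ) := by exact_mod_cast hcΩpos
    rw [div_eq_div_iff hnpos.ne' hcΩposR.ne']
    linarith [hncast]
  -- if the string of card c ties with nobody, the two positions agree
  have hFG : ∀ ω : (Fin n → Fin t → Bool) × Equiv.Perm (Fin n),
      ¬ (∃ j, ¬ j = c ∧ strVal t (ω.1 j) = strVal t (ω.1 c)) → F ω = G ω := by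
    intro ω h
    push_neg at h
    apply Fin.ext
    show (((riffleResult t σ₀ ω.1)⁻¹ c : Fin n) : ℕ) = rnk t ω.1 ω.2 c
    rw [posF_eq t σ₀ ω.1 c, rnk_tie_free (fun j hj => h j hj) _,
      rnk_tie_free (fun j hj => h j hj) _]
  -- bound on the number of sample points where the two positions disagree
  have hM : (univ.filter (fun ω : (Fin n → Fin t → Bool) × Equiv.Perm (Fin n) =>
        ¬ F ω = G ω)).card
      ≤ (n - 1) * (2 ^ t) ^ (n - 1) * cP := by
    have hsub : (univ.filter (fun ω : (Fin n → Fin t → Bool) × Equiv.Perm (Fin n) =>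
          ¬ F ω = G ω))
        ⊆ ((univ.filter (fun s : Fin n → Fin t → Bool =>
            ∃ j, ¬ j = c ∧ strVal t (s j) = strVal t (s c))) ×ˢ univ) := by
      intro ω hω
      simp only [Finset.mem_filter, Finset.mem_univ, true_and] at hω
      rw [Finset.mem_product]
      refine ⟨?_, Finset.mem_univ _⟩
      simp only [Finset.mem_filter, Finset.mem_univ, true_and]
      by_contra hcon
      exact hω (hFG ω hcon)
    calc (univ.filter (fun ω : (Fin n → Fin t → Bool) × Equiv.Perm (Fin n) =>
          ¬ F ω = G ω)).card
        ≤ ((univ.filter (fun s : Fin n → Fin t → Bool =>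
            ∃ j, ¬ j = c ∧ strVal t (s j) = strVal t (s c))) ×ˢ univ).card :=
          Finset.card_le_card hsub
      _ = (univ.filter (fun s : Fin n → Fin t → Bool =>
            ∃ j, ¬ j = c ∧ strVal t (s j) = strVal t (s c))).card * cP := by
          rw [Finset.card_product, Finset.card_univ]
      _ ≤ (n - 1) * (2 ^ t) ^ (n - 1) * cP :=
          Nat.mul_le_mul_right cP (tie_count t c)
  -- assemble
  rw [tvDist]
  have hcΩposR : (0:ℝ) < (cΩ : ℝ) := by exact_mod_cast hcΩpos
  have hsum : ∑ a : Fin n,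
      |((((PMF.uniformOfFintype (Fin n → Fin t → Bool)).map
        (fun s => (riffleResult t σ₀ s)⁻¹ c)) a).toReal)
        - (((PMF.uniformOfFintype (Fin n)) a).toReal)|
      ≤ 2 * ((univ.filter (fun ω : (Fin n → Fin t → Bool) × Equiv.Perm (Fin n) =>
          ¬ F ω = G ω)).card : ℝ) / cΩ := by
    calc ∑ a : Fin n,
        |((((PMF.uniformOfFintype (Fin n → Fin t → Bool)).map
          (fun s => (riffleResult t σ₀ s)⁻¹ c)) a).toReal)
          - (((PMF.uniformOfFintype (Fin n)) a).toReal)|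
        = (∑ a : Fin n, |((univ.filter
              (fun ω : (Fin n → Fin t → Bool) × Equiv.Perm (Fin n) => F ω = a)).card : ℝ)
            - ((univ.filter
              (fun ω : (Fin n → Fin t → Bool) × Equiv.Perm (Fin n) => G ω = a)).card : ℝ)|)
            / cΩ := by
          rw [Finset.sum_div]
          refine Finset.sum_congr rfl fun a _ => ?_
          rw [hμ a, hν a, div_sub_div_same, abs_div, abs_of_pos hcΩposR]
      _ ≤ (2 * ((univ.filter (fun ω : (Fin n → Fin t → Bool) × Equiv.Perm (Fin n) =>
            ¬ F ω = G ω)).card : ℝ)) / cΩ := by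
          gcongr
          exact sum_abs_card_le F G
      _ = 2 * ((univ.filter (fun ω : (Fin n → Fin t → Bool) × Equiv.Perm (Fin n) =>
            ¬ F ω = G ω)).card : ℝ) / cΩ := by ring
  calc (1/2 : ℝ) * ∑ a : Fin n,
      |((((PMF.uniformOfFintype (Fin n → Fin t → Bool)).map
        (fun s => (riffleResult t σ₀ s)⁻¹ c)) a).toReal)
        - (((PMF.uniformOfFintype (Fin n)) a).toReal)|
      ≤ (1/2 : ℝ) * (2 * ((univ.filter
          (fun ω : (Fin n → Fin t → Bool) × Equiv.Perm (Fin n) =>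
          ¬ F ω = G ω)).card : ℝ) / cΩ) :=
        mul_le_mul_of_nonneg_left hsum (by norm_num)
    _ = ((univ.filter (fun ω : (Fin n → Fin t → Bool) × Equiv.Perm (Fin n) =>
          ¬ F ω = G ω)).card : ℝ) / cΩ := by ring
    _ ≤ (((n - 1) * (2 ^ t) ^ (n - 1) * cP : ℕ) : ℝ) / cΩ := by
        gcongr
    _ = ((n : ℝ) - 1) / 2 ^ t := by
        have hpow : ((2:ℝ) ^ t) ^ n = ((2:ℝ) ^ t) ^ (n - 1) * 2 ^ t := by
          rw [← pow_succ]
          congr 1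
          omega
        have hPne : (cP : ℝ) ≠ 0 := by exact_mod_cast hcPpos.ne'
        have h2tn1 : ((2:ℝ) ^ t) ^ (n - 1) ≠ 0 := by positivity
        rw [hcΩ']
        push_cast [Nat.cast_sub hn1]
        rw [hpow]
        field_simp
end

section
/- Let n ≥ 2 and consider the random transposition walk on a deck of n cards: at each step, a label i and a position j are chosen independently and uniformly at random from {1,…,n}, and the card with label i is swapped with the card in position j (if the card labelled i already occupies position j, the deck is unchanged). Starting from any fixed deck order, after t steps the total variation distance between the distribution of the label of the card in position 1 (the top card) and the uniform distribution on the n labels is at most (1 − 1/n)^t. -/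
open scoped Classical

/-- The random transposition walk on a deck of `n` cards.  A deck order is a permutation
`σ : Equiv.Perm (Fin n)`, where `σ p` is the label of the card in position `p`
(position `0` being the top).  A label `i` and a position `j` are chosen independently and
uniformly at random, and the card with label `i` is swapped with the card in position `j` (if
the card labelled `i` already occupies position `j`, the deck is unchanged). -/
noncomputable def randomTransposition (n : ℕ) [NeZero n] :
    Equiv.Perm (Fin n) → PMF (Equiv.Perm (Fin n)) :=
  fun σ => (PMF.uniformOfFintype (Fin n × Fin n)).map
    (fun ij => σ * Equiv.swap (σ⁻¹ ij.1) ij.2)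



open scoped ENNReal

set_option linter.unnecessarySeqFocus false

lemma stepsPMF_succ' {Ω : Type*} (M : Ω → PMF Ω) (t : ℕ) (x : Ω) :
    stepsPMF M (t+1) x = (stepsPMF M t x).bind M := by
  induction t generalizing x with
  | zero =>
      show (M x).bind (stepsPMF M 0) = (PMF.pure x).bind M
      rw [PMF.pure_bind]
      have : stepsPMF M 0 = fun y => PMF.pure y := rfl
      rw [this, PMF.bind_pure]
  | succ t ih =>
      show (M x).bind (stepsPMF M (t+1)) = ((M x).bind (stepsPMF M t)).bind M
      rw [PMF.bind_bind]
      exact congrArg _ (funext ih)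

lemma swap_count (n : ℕ) [NeZero n] (q : Fin n) (c : ℝ≥0∞) :
    ∑ p : Fin n, ∑ j : Fin n, (if q = Equiv.swap p j 0 then c else 0)
      = (if q = 0 then (((n-1)^2 + 1 : ℕ) : ℝ≥0∞) else 2) * c := by
  have h2 : ∀ p ∈ ({0}ᶜ : Finset (Fin n)),
      (∑ j : Fin n, (if q = Equiv.swap p j 0 then c else 0))
        = (if q = p then c else 0) + (n-1) • (if q = 0 then c else 0) := by
    intro p hp
    have hp0 : p ≠ 0 := by simpa using hp
    have hs : ∀ j : Fin n, Equiv.swap p j 0 = if 0 = j then p else 0 := by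
      intro j
      rw [Equiv.swap_apply_def]
      simp [eq_comm, hp0, Ne.symm hp0]
    simp_rw [hs]
    rw [Fintype.sum_eq_add_sum_compl 0]
    have e2 : ∀ j ∈ ({0}ᶜ : Finset (Fin n)),
        (if q = (if (0:Fin n) = j then p else 0) then c else 0) = (if q = 0 then c else 0) := by
      intro j hj
      have hj0 : (0 : Fin n) ≠ j := by simp at hj; exact fun h => hj h.symm
      rw [if_neg hj0]
    rw [Finset.sum_congr rfl e2, Finset.sum_const, Finset.card_compl]
    simp
  rw [Fintype.sum_eq_add_sum_compl 0, Finset.sum_congr rfl h2, Finset.sum_add_distrib,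
    Finset.sum_ite_eq, Finset.sum_const, Finset.card_compl]
  have h1 : ∑ j : Fin n, (if q = Equiv.swap 0 j 0 then c else 0) = c := by
    simp only [Equiv.swap_apply_left]
    rw [Finset.sum_ite_eq]
    simp
  rw [h1]
  simp only [Fintype.card_fin, Finset.card_singleton, Finset.mem_compl, Finset.mem_singleton]
  by_cases hq : q = 0
  · rw [if_pos hq, if_pos hq, if_neg (by simp [hq])]
    push_cast
    simp [smul_smul, nsmul_eq_mul]
    ring
  · rw [if_neg hq, if_neg hq, if_pos hq]
    simp
    ring

lemma kernel_apply (n : ℕ) [NeZero n] (σ : Equiv.Perm (Fin n)) (a : Fin n) :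
    ((randomTransposition n σ).map (fun τ => τ 0)) a
      = (if a = σ 0 then (((n-1)^2 + 1 : ℕ) : ℝ≥0∞) else 2) * (((n*n : ℕ) : ℝ≥0∞))⁻¹ := by
  rw [randomTransposition, PMF.map_comp, PMF.map_apply, tsum_fintype]
  have hcond : ∀ ij : Fin n × Fin n,
      (a = ((fun τ : Equiv.Perm (Fin n) => τ 0) ∘ fun ij : Fin n × Fin n =>
        σ * Equiv.swap (σ⁻¹ ij.1) ij.2) ij) ↔ (σ⁻¹ a = Equiv.swap (σ⁻¹ ij.1) ij.2 0) := by
    intro ij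
    simp only [Function.comp_apply, Equiv.Perm.mul_apply]
    constructor
    · rintro rfl; simp
    · intro h
      have := congrArg σ h
      simpa using this
  simp_rw [PMF.uniformOfFintype_apply]
  rw [Finset.sum_congr rfl (fun ij _ => by rw [if_congr (hcond ij) rfl rfl])]
  rw [Fintype.sum_prod_type]
  rw [Equiv.sum_comp (σ⁻¹ : Equiv.Perm (Fin n))
    (fun p => ∑ j : Fin n, (if σ⁻¹ a = Equiv.swap p j 0 then ((Fintype.card (Fin n × Fin n) : ℝ≥0∞))⁻¹ else 0))]
  rw [swap_count]
  have hq : (σ⁻¹ a = 0) ↔ (a = σ 0) := by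
    constructor
    · intro h; have := congrArg σ h; simpa using this
    · rintro rfl; simp
  rw [if_congr hq rfl rfl]
  congr 2
  simp [Fintype.card_prod]

lemma top_rec (n : ℕ) [NeZero n] (hn : 2 ≤ n) (σ₀ : Equiv.Perm (Fin n)) (t : ℕ) (a : Fin n) :
    ((stepsPMF (randomTransposition n) (t+1) σ₀).map (fun σ => σ 0)) a
      = 2 * (((n*n : ℕ) : ℝ≥0∞))⁻¹
        + ((n*(n-2) : ℕ) : ℝ≥0∞) * (((n*n : ℕ) : ℝ≥0∞))⁻¹
          * ((stepsPMF (randomTransposition n) t σ₀).map (fun σ => σ 0)) a := by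
  obtain ⟨m, rfl⟩ : ∃ m, n = m + 2 := ⟨n - 2, by omega⟩
  set c : ℝ≥0∞ := ((((m+2)*(m+2) : ℕ) : ℝ≥0∞))⁻¹ with hc
  rw [stepsPMF_succ', PMF.map_bind, PMF.bind_apply]
  simp_rw [kernel_apply]
  set q := stepsPMF (randomTransposition (m+2)) t σ₀ with hqdef
  have hA : (((m+2-1)^2 + 1 : ℕ) : ℝ≥0∞) = 2 + (((m+2)*(m+2-2) : ℕ) : ℝ≥0∞) := by
    have : ((m+2-1)^2 + 1 : ℕ) = 2 + (m+2)*(m+2-2) := by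
      simp only [Nat.add_sub_cancel, Nat.succ_sub_one]
      ring
    rw [this]; push_cast; ring
  have hterm : ∀ σ : Equiv.Perm (Fin (m+2)),
      q σ * ((if a = σ 0 then (((m+2-1)^2 + 1 : ℕ) : ℝ≥0∞) else 2) * c)
        = 2 * c * q σ + (((m+2)*(m+2-2) : ℕ) : ℝ≥0∞) * c * (if a = σ 0 then q σ else 0) := by
    intro σ
    by_cases h : a = σ 0
    · rw [if_pos h, if_pos h, hA]; ring
    · rw [if_neg h, if_neg h]; ring
  rw [tsum_congr hterm, ENNReal.tsum_add, ENNReal.tsum_mul_left, ENNReal.tsum_mul_left,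
    PMF.tsum_coe, mul_one]
  rw [PMF.map_apply]
  exact congrArg _ (congrArg _ (tsum_congr fun σ => by split_ifs <;> rfl))

lemma sum_toReal_one {Ω : Type*} [Fintype Ω] (μ : PMF Ω) : ∑ a, (μ a).toReal = 1 := by
  have h := μ.tsum_coe
  rw [tsum_fintype] at h
  rw [← ENNReal.toReal_sum (fun a _ => μ.apply_ne_top a), h, ENNReal.toReal_one]

lemma tvDist_nonneg {Ω : Type*} [Fintype Ω] (μ ν : PMF Ω) : 0 ≤ tvDist μ ν := by
  have : (0:ℝ) ≤ ∑ a, |(μ a).toReal - (ν a).toReal| :=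
    Finset.sum_nonneg fun a _ => abs_nonneg _
  unfold tvDist; linarith

lemma tvDist_le_one {Ω : Type*} [Fintype Ω] (μ ν : PMF Ω) : tvDist μ ν ≤ 1 := by
  unfold tvDist
  have hle : ∀ a ∈ Finset.univ, |(μ a).toReal - (ν a).toReal| ≤ (μ a).toReal + (ν a).toReal := by
    intro a _
    have h1 : (0:ℝ) ≤ (μ a).toReal := ENNReal.toReal_nonneg
    have h2 : (0:ℝ) ≤ (ν a).toReal := ENNReal.toReal_nonneg
    rw [abs_sub_le_iff]; constructor <;> linarith
  have := Finset.sum_le_sum hle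
  rw [Finset.sum_add_distrib, sum_toReal_one, sum_toReal_one] at this
  linarith

/-- After `t` random transpositions from any starting order, the label of the top card is within
`(1 - 1/n)^t` of uniform on the `n` labels in total variation. -/
theorem randomTransposition_top_card (n : ℕ) [NeZero n] (hn : 2 ≤ n)
    (σ₀ : Equiv.Perm (Fin n)) (t : ℕ) :
    tvDist ((stepsPMF (randomTransposition n) t σ₀).map (fun σ => σ 0))
      (PMF.uniformOfFintype (Fin n)) ≤ (1 - 1 / (n : ℝ)) ^ t := by
  have hn2 : (2:ℝ) ≤ (n:ℝ) := by exact_mod_cast hn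
  have hn0 : (0:ℝ) < n := by linarith
  have hpos : (0:ℝ) ≤ 1 - 1/(n:ℝ) := by
    have : 1/(n:ℝ) ≤ 1 := by rw [div_le_one hn0]; linarith
    linarith
  have hU : ∀ a : Fin n, ((PMF.uniformOfFintype (Fin n)) a).toReal = 1/(n:ℝ) := by
    intro a
    rw [PMF.uniformOfFintype_apply, ENNReal.toReal_inv]
    simp [one_div]
  set P : ℕ → PMF (Fin n) :=
    fun s => (stepsPMF (randomTransposition n) s σ₀).map (fun σ => σ 0) with hP
  show tvDist (P t) (PMF.uniformOfFintype (Fin n)) ≤ (1 - 1 / (n : ℝ)) ^ t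
  induction t with
  | zero => simpa using tvDist_le_one _ _
  | succ t ih =>
    set k : ℝ := ((n*(n-2) : ℕ) : ℝ) * (((n*n : ℕ) : ℝ))⁻¹ with hk
    have hk0 : 0 ≤ k := by positivity
    have hkval : k = 1 - 2/(n:ℝ) := by
      rw [hk]
      push_cast [Nat.cast_sub hn]
      field_simp
    have hk1 : k ≤ 1 - 1/(n:ℝ) := by
      rw [hkval]
      have : 1/(n:ℝ) ≤ 2/n := by gcongr <;> norm_num
      linarith
    have hrec : ∀ a, ((P (t+1)) a).toReal = 2 * (((n*n : ℕ) : ℝ))⁻¹ + k * ((P t) a).toReal := by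
      intro a
      have h := top_rec n hn σ₀ t a
      have hnn : (((n*n : ℕ) : ℝ≥0∞)) ≠ 0 := by
        have : (n*n : ℕ) ≠ 0 := by positivity
        exact_mod_cast this
      have hfin1 : (2 * (((n*n : ℕ) : ℝ≥0∞))⁻¹) ≠ ⊤ := by
        apply ENNReal.mul_ne_top (by norm_num)
        simp only [ne_eq, ENNReal.inv_eq_top]
        exact hnn
      have hfin2 : ((n*(n-2) : ℕ) : ℝ≥0∞) * (((n*n : ℕ) : ℝ≥0∞))⁻¹ * ((P t) a) ≠ ⊤ := by
        apply ENNReal.mul_ne_top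
        · apply ENNReal.mul_ne_top (ENNReal.natCast_ne_top _)
          simp only [ne_eq, ENNReal.inv_eq_top]
          exact hnn
        · exact PMF.apply_ne_top _ _
      have h' : ((P (t+1)) a) = 2 * (((n*n : ℕ) : ℝ≥0∞))⁻¹
          + ((n*(n-2) : ℕ) : ℝ≥0∞) * (((n*n : ℕ) : ℝ≥0∞))⁻¹ * ((P t) a) := h
      rw [h', ENNReal.toReal_add hfin1 hfin2, ENNReal.toReal_mul, ENNReal.toReal_mul,
        ENNReal.toReal_mul, ENNReal.toReal_inv]
      have e1 : ((2:ℝ≥0∞)).toReal = (2:ℝ) := by simp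
      have e2 : (((n*n : ℕ):ℝ≥0∞)).toReal = ((n*n : ℕ):ℝ) := by
        exact ENNReal.toReal_natCast _
      have e3 : (((n*(n-2) : ℕ):ℝ≥0∞)).toReal = ((n*(n-2) : ℕ):ℝ) := by
        exact ENNReal.toReal_natCast _
      rw [e1, e2, e3, hk]
    have hmean : 2 * (((n*n : ℕ) : ℝ))⁻¹ + k * (1/(n:ℝ)) = 1/(n:ℝ) := by
      rw [hkval]
      push_cast
      field_simp
      ring
    have hdiff : ∀ a, ((P (t+1)) a).toReal - 1/(n:ℝ) = k * (((P t) a).toReal - 1/(n:ℝ)) := by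
      intro a
      rw [hrec a]
      linarith [hmean]
    have htv : tvDist (P (t+1)) (PMF.uniformOfFintype (Fin n))
        = k * tvDist (P t) (PMF.uniformOfFintype (Fin n)) := by
      unfold tvDist
      have hterm : ∀ a ∈ (Finset.univ : Finset (Fin n)),
          |((P (t+1)) a).toReal - ((PMF.uniformOfFintype (Fin n)) a).toReal|
            = k * |((P t) a).toReal - ((PMF.uniformOfFintype (Fin n)) a).toReal| := by
        intro a _
        rw [hU, hdiff a, abs_mul, abs_of_nonneg hk0]
      rw [Finset.sum_congr rfl hterm, ← Finset.mul_sum]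
      ring
    calc tvDist (P (t+1)) (PMF.uniformOfFintype (Fin n))
        = k * tvDist (P t) (PMF.uniformOfFintype (Fin n)) := htv
      _ ≤ (1 - 1/(n:ℝ)) * (1 - 1/(n:ℝ))^t :=
          mul_le_mul hk1 ih (tvDist_nonneg _ _) hpos
      _ = (1 - 1/(n:ℝ))^(t+1) := by ring
end
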